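/- arXiv:1408.6573 — 8 statements merged into one kernel-verified Lean document; each statement's English description precedes it below -/
import Mathlib

section
/- Let F be a field, λ a positive integer, and K, L sets of integers ≥ 2. Suppose there exists a PBD(v,L) (index 1), and for each u ∈ L there exists a PBD_λ(u,K) whose generalized incidence matrix N_2 is square (i.e. the number of blocks equals u(u-1)/2) and of full rank over F. Then there exists a PBD_λ(v,K) whose generalized incidence matrix N_2 is square of order v(v-1)/2 and of full rank over F. -/
open Finset

/-- `IsPBD B lam K`: the indexed family of blocks `B` (a multiset of subsets of the
point set `V`, one block per index) is a pairwise balanced design `PBD_lam(|V|, K)`: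
every block has size in `K`, and every pair of distinct points lies in exactly `lam`
blocks (counted with multiplicity). -/
def IsPBD {V : Type*} [DecidableEq V] {ι : Type*} [Fintype ι]
    (B : ι → Finset V) (lam : ℕ) (K : Set ℕ) : Prop :=
  (∀ i, (B i).card ∈ K) ∧
  (∀ p : Finset V, p.card = 2 → (Finset.univ.filter (fun i => p ⊆ B i)).card = lam)

/-- The generalized incidence matrix `N₂`: rows indexed by 2-element subsets of the
point set, columns indexed by the blocks (with multiplicity); entry is 1 if the pair
is contained in the block, and 0 otherwise. -/
def N2 {V : Type*} [DecidableEq V] {ι : Type*} (F : Type*) [Zero F] [One F]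
    (B : ι → Finset V) : Matrix {P : Finset V // P.card = 2} ι F :=
  Matrix.of fun P i => if (P : Finset V) ⊆ B i then 1 else 0

lemma rank_eq_card_iff_inj {F : Type*} [Field F] {m n : Type*} [Fintype n]
    (M : Matrix m n F) :
    M.rank = Fintype.card n ↔ Function.Injective M.mulVecLin := by
  constructor
  · intro h
    rw [← LinearMap.ker_eq_bot]
    have h2 := M.mulVecLin.finrank_range_add_finrank_ker
    rw [Module.finrank_fintype_fun_eq_card] at h2
    rw [Matrix.rank] at h
    have : Module.finrank F (LinearMap.ker M.mulVecLin) = 0 := by omega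
    exact Submodule.finrank_eq_zero.mp this
  · intro h
    rw [Matrix.rank, LinearMap.finrank_range_of_inj h,
      Module.finrank_fintype_fun_eq_card]

/-- PBD closure of the "square nonsingular `N₂`" property: if a `PBD(v, L)` (index 1)
exists, and for every `u ∈ L` there is a `PBD_lam(u, K)` whose matrix `N₂` is square
(with `u(u-1)/2` blocks) and of full rank over the field `F`, then there is a
`PBD_lam(v, K)` whose matrix `N₂` is square of order `v(v-1)/2` and of full rank
over `F`. -/
theorem pbd_closure_nonsingular_N2 (F : Type*) [Field F] (lam v : ℕ) (hlam : 0 < lam)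
    (K L : Set ℕ) (hK : ∀ k ∈ K, 2 ≤ k) (hL : ∀ l ∈ L, 2 ≤ l)
    (hPBD : ∃ (n : ℕ) (A : Fin n → Finset (Fin v)), IsPBD A 1 L)
    (hsub : ∀ u ∈ L, ∃ C : Fin (u * (u - 1) / 2) → Finset (Fin u),
      IsPBD C lam K ∧ (N2 F C).rank = u * (u - 1) / 2) :
    ∃ B : Fin (v * (v - 1) / 2) → Finset (Fin v),
      IsPBD B lam K ∧ (N2 F B).rank = v * (v - 1) / 2 := by
  classical
  obtain ⟨n, A, hAcard, hApair⟩ := hPBD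
  choose C hC hCrank using fun j : Fin n => hsub ((A j).card) (hAcard j)
  set f : ∀ j : Fin n, Fin (A j).card ↪o Fin v := fun j => (A j).orderEmbOfFin rfl with hf
  have hrange : ∀ j, (univ.map (f j).toEmbedding : Finset (Fin v)) = A j := by
    intro j
    ext x
    simp only [Finset.mem_map, Finset.mem_univ, true_and]
    constructor
    · rintro ⟨a, rfl⟩
      have : (f j) a ∈ Set.range (f j) := Set.mem_range_self a
      rwa [hf, Finset.range_orderEmbOfFin] at this
    · intro hx
      have : x ∈ Set.range (f j) := by
        rw [hf, Finset.range_orderEmbOfFin]; exact hx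
      obtain ⟨a, ha⟩ := this
      exact ⟨a, ha⟩
  set σι := (j : Fin n) × Fin ((A j).card * ((A j).card - 1) / 2) with hσι
  set B' : σι → Finset (Fin v) := fun s => (C s.1 s.2).map (f s.1).toEmbedding with hB'
  -- any block of B' at index ⟨j,i⟩ is inside A j
  have hBsub : ∀ (j) (i), B' ⟨j, i⟩ ⊆ A j := by
    intro j i
    rw [← hrange j]
    exact Finset.map_subset_map.mpr (Finset.subset_univ _)
  -- uniqueness of master block containing a pair
  have huniq : ∀ p : Finset (Fin v), p.card = 2 → ∀ j j', p ⊆ A j → p ⊆ A j' → j = j' := by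
    intro p hp j j' h1 h2
    obtain ⟨a, ha⟩ := Finset.card_eq_one.mp (hApair p hp)
    have hj : j ∈ univ.filter (fun i => p ⊆ A i) := by simp [h1]
    have hj' : j' ∈ univ.filter (fun i => p ⊆ A i) := by simp [h2]
    rw [ha, Finset.mem_singleton] at hj hj'
    rw [hj, hj']
  -- lifting pairs
  have hlift : ∀ (j) (p : Finset (Fin v)), p ⊆ A j →
      ∃ q : Finset (Fin (A j).card), p = q.map (f j).toEmbedding := by
    intro j p hp
    rw [← hrange j] at hp
    obtain ⟨q, _, hq⟩ := Finset.subset_map_iff.mp hp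
    exact ⟨q, hq⟩
  -- cardinality of σι
  have hcard : Fintype.card σι = v * (v - 1) / 2 := by
    rw [Fintype.card_sigma]
    have h1 : ∀ j : Fin n, Fintype.card (Fin ((A j).card * ((A j).card - 1) / 2))
        = (((univ : Finset (Fin v)).powersetCard 2).filter (· ⊆ A j)).card := by
      intro j
      have : ((univ : Finset (Fin v)).powersetCard 2).filter (· ⊆ A j)
          = (A j).powersetCard 2 := by
        ext p
        simp only [Finset.mem_filter, Finset.mem_powersetCard]
        constructor
        · rintro ⟨⟨-, h2⟩, h3⟩; exact ⟨h3, h2⟩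
        · rintro ⟨h1, h2⟩; exact ⟨⟨Finset.subset_univ _, h2⟩, h1⟩
      rw [this, Finset.card_powersetCard, Fintype.card_fin, Nat.choose_two_right]
    simp_rw [h1, Finset.card_filter]
    rw [Finset.sum_comm]
    have h2 : ∀ p ∈ (univ : Finset (Fin v)).powersetCard 2,
        (∑ j : Fin n, if p ⊆ A j then 1 else 0) = 1 := by
      intro p hp
      rw [← Finset.card_filter]
      exact hApair p (Finset.mem_powersetCard.mp hp).2
    rw [Finset.sum_congr rfl h2, Finset.sum_const, smul_eq_mul, mul_one,
      Finset.card_powersetCard, Finset.card_univ, Fintype.card_fin, Nat.choose_two_right]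
  set e : Fin (v * (v - 1) / 2) ≃ σι := (Fintype.equivFinOfCardEq hcard).symm with he
  refine ⟨B' ∘ e, ⟨?_, ?_⟩, ?_⟩
  · intro k
    simpa [hB', Finset.card_map] using (hC (e k).1).1 (e k).2
  · -- pair count
    intro p hp
    rw [Finset.card_filter]
    rw [Fintype.sum_equiv e (fun k => if p ⊆ (B' ∘ e) k then (1 : ℕ) else 0)
      (fun s => if p ⊆ B' s then 1 else 0) (fun k => rfl)]
    rw [← Finset.univ_sigma_univ, Finset.sum_sigma]
    have hinner : ∀ j : Fin n,
        (∑ i, if p ⊆ B' ⟨j, i⟩ then (1 : ℕ) else 0) = if p ⊆ A j then lam else 0 := by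
      intro j
      by_cases hpj : p ⊆ A j
      · rw [if_pos hpj]
        obtain ⟨q, hq⟩ := hlift j p hpj
        have hq2 : q.card = 2 := by
          rw [hq, Finset.card_map] at hp; exact hp
        have : ∀ i, (p ⊆ B' ⟨j, i⟩) ↔ q ⊆ C j i := by
          intro i
          rw [hq]
          exact Finset.map_subset_map
        simp_rw [this]
        rw [← Finset.card_filter]
        exact (hC j).2 q hq2
      · rw [if_neg hpj]
        refine Finset.sum_eq_zero fun i _ => ?_
        rw [if_neg fun h => hpj (h.trans (hBsub j i))]
    rw [Finset.sum_congr rfl (fun j _ => hinner j)]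
    rw [← Finset.sum_filter, Finset.sum_const, hApair p hp, smul_eq_mul, one_mul]
  · -- rank
    have hinj : Function.Injective (N2 F (B' ∘ e)).mulVecLin := by
      rw [← LinearMap.ker_eq_bot, LinearMap.ker_eq_bot']
      intro x hx
      have hx' : ∀ P : {P : Finset (Fin v) // P.card = 2},
          (∑ s : σι, (if (P : Finset (Fin v)) ⊆ B' s then (1 : F) else 0) * x (e.symm s))
            = 0 := by
        intro P
        have h0 := congrFun hx P
        rw [Matrix.mulVecLin_apply] at h0
        simp only [Pi.zero_apply] at h0
        refine Eq.trans ?_ h0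
        rw [Matrix.mulVec, dotProduct]
        refine Fintype.sum_equiv e.symm _ _ fun s => ?_
        simp [N2]
      -- per-block vanishing
      have hj0 : ∀ (j : Fin n) (i : Fin ((A j).card * ((A j).card - 1) / 2)),
          x (e.symm ⟨j, i⟩) = 0 := by
        intro j
        have hinjj : Function.Injective (N2 F (C j)).mulVecLin := by
          refine (rank_eq_card_iff_inj _).mp ?_
          rw [Fintype.card_fin]
          exact hCrank j
        set y : Fin ((A j).card * ((A j).card - 1) / 2) → F :=
          fun i => x (e.symm ⟨j, i⟩) with hy
        have hy0 : (N2 F (C j)).mulVecLin y = 0 := by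
          funext Q
          rw [Matrix.mulVecLin_apply, Pi.zero_apply, Matrix.mulVec, dotProduct]
          set P : Finset (Fin v) := (Q : Finset (Fin (A j).card)).map (f j).toEmbedding
            with hP
          have hP2 : P.card = 2 := by rw [hP, Finset.card_map]; exact Q.2
          have hPA : P ⊆ A j := by
            calc P ⊆ (univ.map (f j).toEmbedding : Finset (Fin v)) := by
                  rw [hP]; exact Finset.map_subset_map.mpr (Finset.subset_univ _)
              _ = A j := hrange j
          have h1 := hx' ⟨P, hP2⟩
          rw [← Finset.univ_sigma_univ, Finset.sum_sigma] at h1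
          rw [Finset.sum_eq_single_of_mem j (Finset.mem_univ j)] at h1
          · rw [← h1]
            refine Finset.sum_congr rfl fun i _ => ?_
            have hiff : ((⟨P, hP2⟩ : {P : Finset (Fin v) // P.card = 2}) : Finset (Fin v))
                ⊆ B' ⟨j, i⟩ ↔ (Q : Finset (Fin (A j).card)) ⊆ C j i := by
              show P ⊆ _ ↔ _
              rw [hP]
              exact Finset.map_subset_map
            show (if (Q : Finset (Fin (A j).card)) ⊆ C j i then (1 : F) else 0) * y i = _
            by_cases hQ : (Q : Finset (Fin (A j).card)) ⊆ C j i
            · rw [if_pos hQ, if_pos (hiff.mpr hQ)]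
            · rw [if_neg hQ, if_neg (fun h => hQ (hiff.mp h))]
          · intro j' _ hjj'
            refine Finset.sum_eq_zero fun i _ => ?_
            have : ¬ P ⊆ B' ⟨j', i⟩ := fun h =>
              hjj' (huniq P hP2 j' j (h.trans (hBsub j' i)) hPA)
            rw [if_neg this, zero_mul]
        have := hinjj (a₁ := y) (a₂ := 0) (by rw [hy0, map_zero])
        intro i
        exact congrFun this i
      funext k
      have : x (e.symm (e k)) = 0 := hj0 (e k).1 (e k).2
      rwa [Equiv.symm_apply_apply] at this
    have := (rank_eq_card_iff_inj (N2 F (B' ∘ e))).mpr hinj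
    rwa [Fintype.card_fin] at this
end

section
/- Every threefold triple system TS_3(5) on a 5-element point set is the complete design consisting of all ten 3-element subsets of the point set, each occurring exactly once. -/
open Finset

/-! For a triple `T`, count block by block the pairs lying in `T` together with the pair `Tᶜ`.
A block meeting `T` in `k` points contains `C(k,2) + C(3-k,2)` of them, which is `3` if the block
is `T` and `1` otherwise (`k ≥ 1`, since five points leave no room for a block disjoint from `T`).
Summing over the `b` blocks gives `3·C(3,2) + 3·C(2,2) = b + 2·m(T)`, where `m(T)` is the
multiplicity of `T`, and `3b = 3·C(5,2)` gives `b = 10`; hence `m(T) = 1`. -/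

section

variable {V ι : Type*} [DecidableEq V] [Fintype ι]

theorem sum_choose_two_card_inter_eq_sum_card_filter_subset (B : ι → Finset V) (T : Finset V) :
    ∑ i, (#(T ∩ B i)).choose 2 = ∑ p ∈ T.powersetCard 2, #{i | p ⊆ B i} := by
  have h : ∀ i, (#(T ∩ B i)).choose 2 = #{p ∈ T.powersetCard 2 | p ⊆ B i} := fun i => by
    rw [← card_powersetCard]
    congr 1
    ext p
    simp only [mem_powersetCard, subset_inter_iff, mem_filter]
    tauto
  simp only [h]
  exact sum_card_bipartiteAbove_eq_sum_card_bipartiteBelow (fun i p => p ⊆ B i)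

theorem IsPBD.sum_choose_two_card_inter {B : ι → Finset V} {lam : ℕ} {K : Set ℕ}
    (hB : IsPBD B lam K) (T : Finset V) :
    ∑ i, (#(T ∩ B i)).choose 2 = lam * (#T).choose 2 := by
  rw [sum_choose_two_card_inter_eq_sum_card_filter_subset, ← card_powersetCard, card_eq_sum_ones,
    mul_sum, mul_one]
  exact sum_congr rfl fun p hp => hB.2 p (mem_powersetCard.1 hp).2

theorem IsPBD.card_mul_choose_two [Fintype V] {B : ι → Finset V} {lam k : ℕ}
    (hB : IsPBD B lam {k}) :
    Fintype.card ι * k.choose 2 = lam * (Fintype.card V).choose 2 := by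
  simpa only [univ_inter, fun i => Set.mem_singleton_iff.1 (hB.1 i), sum_const, card_univ,
    smul_eq_mul] using hB.sum_choose_two_card_inter univ

theorem choose_two_card_inter_add_choose_two_card_compl_inter [Fintype V]
    (hV : Fintype.card V = 5) {S T : Finset V} (hS : #S = 3) (hT : #T = 3) :
    (#(T ∩ S)).choose 2 + (#(Tᶜ ∩ S)).choose 2 = 1 + 2 * if S = T then 1 else 0 := by
  have hsplit : #(T ∩ S) + #(Tᶜ ∩ S) = 3 := by
    rw [← hS, ← card_inter_add_card_sdiff S T, inter_comm S, sdiff_eq_inter_compl, inter_comm S]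
  have hpos : 1 ≤ #(T ∩ S) := by
    have := card_union_add_card_inter T S
    have := card_le_univ (T ∪ S)
    omega
  have heq : S = T ↔ #(T ∩ S) = 3 := by
    refine ⟨fun h => by rw [h, inter_self, hT], fun h => Subset.antisymm ?_ ?_⟩
    · exact inter_eq_right.1 (eq_of_subset_of_card_le inter_subset_right (by omega))
    · exact inter_eq_left.1 (eq_of_subset_of_card_le inter_subset_left (by omega))
  have hle : #(T ∩ S) ≤ 3 := by omega
  rw [show #(Tᶜ ∩ S) = 3 - #(T ∩ S) by omega]
  simp only [heq]
  interval_cases #(T ∩ S) <;> rfl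

end

/-- Every threefold triple system `TS_3(5)` on a 5-element point set is the complete
design: every 3-element subset of the point set occurs exactly once as a block. -/
theorem ts3_five_is_complete_design {V ι : Type*} [Fintype V] [DecidableEq V]
    [Fintype ι] (hV : Fintype.card V = 5) (B : ι → Finset V) (hB : IsPBD B 3 {3}) :
    ∀ T : Finset V, T.card = 3 → (Finset.univ.filter (fun i => B i = T)).card = 1 := by
  intro T hT
  have hblocks : Fintype.card ι * 3 = 30 := by
    simpa [hV, Nat.choose] using hB.card_mul_choose_two
  have hpairs : ∑ i, ((#(T ∩ B i)).choose 2 + (#(Tᶜ ∩ B i)).choose 2) = 12 := by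
    rw [sum_add_distrib, hB.sum_choose_two_card_inter, hB.sum_choose_two_card_inter, card_compl,
      hV, hT]
    rfl
  have hblockwise : ∑ i, ((#(T ∩ B i)).choose 2 + (#(Tᶜ ∩ B i)).choose 2) =
      Fintype.card ι + 2 * #{i | B i = T} := by
    rw [sum_congr rfl fun i _ => choose_two_card_inter_add_choose_two_card_compl_inter hV
      (Set.mem_singleton_iff.1 (hB.1 i)) hT, sum_add_distrib, ← mul_sum, sum_boole]
    simp
  omega
end

section
/- The block system on 5 points whose blocks are all ten 3-element subsets of the point set (each once) is a TS_3(5), and its generalized incidence matrix N_2 (a 10 × 10 zero-one matrix) is nonsingular over the rationals. -/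
open Finset

/-- The complete design on 5 points: the blocks are all ten 3-element subsets of the
point set, each occurring exactly once. -/
def completeDesign5 : {T : Finset (Fin 5) // T.card = 3} → Finset (Fin 5) :=
  fun T => (T : Finset (Fin 5))


def MZ : Matrix {T : Finset (Fin 5) // T.card = 3} {P : Finset (Fin 5) // P.card = 2} ℤ :=
  Matrix.of fun T P => if ((P : Finset (Fin 5)) ∩ (T : Finset (Fin 5))).card = 1 then -1 else 2

lemma hZ : N2 ℤ completeDesign5 * MZ = (6 : ℤ) • 1 := by decide

lemma hN2map : N2 ℚ completeDesign5 = (N2 ℤ completeDesign5).map (Int.cast) := by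
  ext P i
  simp only [N2, Matrix.of_apply, Matrix.map_apply]
  split <;> simp

lemma hQ : N2 ℚ completeDesign5 * ((1/6 : ℚ) • (MZ.map (Int.cast : ℤ → ℚ))) = 1 := by
  rw [hN2map, Matrix.mul_smul]
  have : (N2 ℤ completeDesign5).map (Int.cast : ℤ → ℚ) * MZ.map (Int.cast : ℤ → ℚ)
      = ((6 : ℤ) • (1 : Matrix {P : Finset (Fin 5) // P.card = 2} {P : Finset (Fin 5) // P.card = 2} ℤ)).map (Int.cast : ℤ → ℚ) := by
    rw [← hZ]
    exact ((N2 ℤ completeDesign5).map_mul (M := MZ) (f := Int.castRingHom ℚ)).symm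
  have h6 : ((6 : ℤ) • (1 : Matrix {P : Finset (Fin 5) // P.card = 2} {P : Finset (Fin 5) // P.card = 2} ℤ)).map (Int.cast : ℤ → ℚ) = (6 : ℚ) • (1 : Matrix {P : Finset (Fin 5) // P.card = 2} {P : Finset (Fin 5) // P.card = 2} ℚ) := by
    ext P Q
    rw [Matrix.map_apply, Matrix.smul_apply, Matrix.smul_apply]
    by_cases h : P = Q <;> simp [Matrix.one_apply, h]
  rw [this, h6, smul_smul]
  norm_num

/-- The complete design on 5 points (all ten triples, each once) is a `TS_3(5)`, its
matrix `N₂` is a 10 × 10 matrix, and `N₂` is nonsingular (of full rank 10) over the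
rationals. -/
theorem completeDesign5_is_ts3_and_N2_nonsingular :
    IsPBD completeDesign5 3 {3} ∧
    Fintype.card {P : Finset (Fin 5) // P.card = 2} = 10 ∧
    Fintype.card {T : Finset (Fin 5) // T.card = 3} = 10 ∧
    (N2 ℚ completeDesign5).rank = 10 := by
  have h2 : Fintype.card {P : Finset (Fin 5) // P.card = 2} = 10 := by decide
  have h3 : Fintype.card {T : Finset (Fin 5) // T.card = 3} = 10 := by decide
  refine ⟨⟨fun i => i.2, ?_⟩, h2, h3, ?_⟩
  · decide
  · refine le_antisymm ?_ ?_
    · exact (Matrix.rank_le_card_height _).trans (le_of_eq h2)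
    · calc (10 : ℕ) = (1 : Matrix {P : Finset (Fin 5) // P.card = 2} _ ℚ).rank := by
            rw [Matrix.rank_one, h2]
        _ ≤ (N2 ℚ completeDesign5).rank := by
            rw [← hQ]; exact Matrix.rank_mul_le_left _ _
end

section
/- The following list of 21 triples on the point set {0,1,...,6} is a TS_3(7) whose generalized incidence matrix N_2 (a 21 × 21 zero-one matrix) is nonsingular over the rationals: {0,1,2},{0,1,3},{0,1,4},{0,2,3},{0,2,5},{0,3,6},{0,4,5},{0,4,6},{0,5,6},{1,2,4},{1,2,6},{1,3,5},{1,3,6},{1,4,5},{1,5,6},{2,3,4},{2,3,5},{2,4,6},{2,5,6},{3,4,5},{3,4,6}. -/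
open Finset

/-- The 21 triples on `{0,1,...,6}` from the paper. -/
def ts3seven : Fin 21 → Finset (Fin 7) :=
  ![{0,1,2}, {0,1,3}, {0,1,4}, {0,2,3}, {0,2,5}, {0,3,6}, {0,4,5},
    {0,4,6}, {0,5,6}, {1,2,4}, {1,2,6}, {1,3,5}, {1,3,6}, {1,4,5},
    {1,5,6}, {2,3,4}, {2,3,5}, {2,4,6}, {2,5,6}, {3,4,5}, {3,4,6}]

set_option maxRecDepth 100000

/-- `108` times the inverse of the Gram matrix `N₂ᵀ N₂`. -/
def Cmat : Matrix (Fin 21) (Fin 21) ℤ :=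
  !![112, (-32), (-32), (-32), (-50), 22, 31, (-5), (-5), (-32), (-50), (-5), 31, 22, (-5), 22, 22, 22, 22, (-23), (-23);
    (-32), 112, (-50), (-32), 22, (-32), (-5), 31, (-5), 22, 22, (-50), (-32), 22, 22, (-5), 31, (-23), (-23), (-5), 22;
    (-32), (-50), 112, 22, 22, 22, (-32), (-50), 22, (-32), 22, 31, (-5), (-32), (-5), (-5), (-23), 31, (-23), 22, (-5);
    (-32), (-32), 22, 112, (-32), (-50), (-5), (-5), 31, 31, (-5), 22, 22, (-23), (-23), (-50), (-32), (-5), 22, 22, 22;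
    (-50), 22, 22, (-32), 112, 22, (-50), 22, (-32), (-5), 31, (-5), (-23), (-5), 22, 22, (-32), (-5), (-32), 31, (-23);
    22, (-32), 22, (-50), 22, 112, 22, (-32), (-50), (-23), (-5), 22, (-32), (-23), 31, 31, (-5), 22, (-5), (-5), (-32);
    31, (-5), (-32), (-5), (-50), 22, 112, (-32), (-32), 22, (-23), 22, (-23), (-32), 22, (-5), 22, (-5), 22, (-50), 31;
    (-5), 31, (-50), (-5), 22, (-32), (-32), 112, (-32), 22, (-5), (-23), 22, 22, (-5), 22, (-23), (-50), 31, 22, (-32);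
    (-5), (-5), 22, 31, (-32), (-50), (-32), (-32), 112, (-23), 22, (-5), 22, 31, (-50), (-23), 22, 22, (-32), (-5), 22;
    (-32), 22, (-32), 31, (-5), (-23), 22, 22, (-23), 112, (-32), (-5), (-5), (-50), 31, (-50), (-5), (-32), 22, 22, 22;
    (-50), 22, 22, (-5), 31, (-5), (-23), (-5), 22, (-32), 112, 22, (-50), 22, (-32), 22, (-5), (-32), (-32), (-23), 31;
    (-5), (-50), 31, 22, (-5), 22, 22, (-23), (-5), (-5), 22, 112, (-32), (-32), (-32), 22, (-50), (-23), 31, (-32), 22;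
    31, (-32), (-5), 22, (-23), (-32), (-23), 22, 22, (-5), (-50), (-32), 112, 22, (-32), (-5), (-5), 22, 22, 31, (-50);
    22, 22, (-32), (-23), (-5), (-23), (-32), 22, 31, (-50), 22, (-32), 22, 112, (-50), 31, 22, (-5), (-5), (-32), (-5);
    (-5), 22, (-5), (-23), 22, 31, 22, (-5), (-50), 31, (-32), (-32), (-32), (-50), 112, (-23), 22, 22, (-32), 22, (-5);
    22, (-5), (-5), (-50), 22, 31, (-5), 22, (-23), (-50), 22, 22, (-5), 31, (-23), 112, (-32), (-32), 22, (-32), (-32);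
    22, 31, (-23), (-32), (-32), (-5), 22, (-23), 22, (-5), (-5), (-50), (-5), 22, 22, (-32), 112, 31, (-50), (-32), 22;
    22, (-23), 31, (-5), (-5), 22, (-5), (-50), 22, (-32), (-32), (-23), 22, (-5), 22, (-32), 31, 112, (-50), 22, (-32);
    22, (-23), (-23), 22, (-32), (-5), 22, 31, (-32), 22, (-32), 31, 22, (-5), (-32), 22, (-50), (-50), 112, (-5), (-5);
    (-23), (-5), 22, 22, 31, (-5), (-50), 22, (-5), 22, (-23), (-32), 31, (-32), 22, (-32), (-32), 22, (-5), 112, (-50);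
    (-23), 22, (-5), 22, (-23), (-32), 31, (-32), 22, 22, 31, 22, (-50), (-5), (-5), (-32), 22, (-32), (-5), (-50), 112]

lemma Cmat_key : Cmat * (N2 ℤ ts3seven).transpose * N2 ℤ ts3seven = (108 : ℤ) • 1 := by
  decide

lemma N2_map : (N2 ℤ ts3seven).map ((↑) : ℤ → ℚ) = N2 ℚ ts3seven := by
  ext P i
  simp only [N2, Matrix.map_apply, Matrix.of_apply, apply_ite ((↑) : ℤ → ℚ)]
  norm_num

/-- The listed 21 triples form a `TS_3(7)`, its matrix `N₂` is a 21 × 21 matrix, and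
`N₂` is nonsingular (of full rank 21) over the rationals. -/
theorem ts3seven_is_ts3_and_N2_nonsingular :
    IsPBD ts3seven 3 {3} ∧
    Fintype.card {P : Finset (Fin 7) // P.card = 2} = 21 ∧
    (N2 ℚ ts3seven).rank = 21 := by
  refine ⟨⟨?_, ?_⟩, ?_, ?_⟩
  · simp only [Set.mem_singleton_iff]; decide
  · decide
  · decide
  · set M : Matrix {P : Finset (Fin 7) // P.card = 2} (Fin 21) ℚ := N2 ℚ ts3seven with hM
    set B : Matrix (Fin 21) {P : Finset (Fin 7) // P.card = 2} ℚ :=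
      (108 : ℚ)⁻¹ • (Cmat.map ((↑) : ℤ → ℚ) * M.transpose) with hBdef
    have key := congrArg (fun A => A.map ((Int.castRingHom ℚ) : ℤ → ℚ)) Cmat_key
    simp only [Matrix.map_mul] at key
    have htr : ((N2 ℤ ts3seven).transpose).map ((Int.castRingHom ℚ) : ℤ → ℚ)
        = ((N2 ℤ ts3seven).map ((Int.castRingHom ℚ) : ℤ → ℚ)).transpose := rfl
    have hcast : ((N2 ℤ ts3seven).map ((Int.castRingHom ℚ) : ℤ → ℚ)) = M := N2_map
    have hsmul : (((108 : ℤ) • (1 : Matrix (Fin 21) (Fin 21) ℤ)).map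
        ((Int.castRingHom ℚ) : ℤ → ℚ)) = (108 : ℚ) • (1 : Matrix (Fin 21) (Fin 21) ℚ) := by
      ext i j
      simp only [Matrix.map_apply, Matrix.smul_apply, Matrix.one_apply, smul_eq_mul,
        mul_ite, mul_one, mul_zero, map_intCast]
      split <;> norm_num
    rw [htr, hcast, hsmul] at key
    have hCmap : (Cmat.map ((Int.castRingHom ℚ) : ℤ → ℚ)) = Cmat.map ((↑) : ℤ → ℚ) := rfl
    rw [hCmap] at key
    have hB : B * M = 1 := by
      rw [hBdef, Matrix.smul_mul, Matrix.mul_assoc, ← Matrix.mul_assoc, key, smul_smul]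
      norm_num
    have h1 : M.rank ≤ 21 := by simpa using M.rank_le_card_width
    have h2 : 21 ≤ M.rank := by
      have := Matrix.rank_mul_le_right B M
      rw [hB] at this
      simpa [Matrix.rank_one] using this
    omega
end

section
/- The following list of 36 triples on the point set {0,1,...,8} is a TS_3(9) whose generalized incidence matrix N_2 (a 36 × 36 zero-one matrix) is nonsingular over the rationals: {0,1,2},{0,1,3},{0,1,4},{0,2,3},{0,2,5},{0,3,6},{0,4,6},{0,4,7},{0,5,7},{0,5,8},{0,6,8},{0,7,8},{1,2,4},{1,2,5},{1,3,6},{1,3,8},{1,4,7},{1,5,6},{1,5,8},{1,6,7},{1,7,8},{2,3,4},{2,3,7},{2,4,8},{2,5,6},{2,6,7},{2,6,8},{2,7,8},{3,4,5},{3,4,8},{3,5,7},{3,5,8},{3,6,7},{4,5,6},{4,5,7},{4,6,8}. -/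
open Finset

/-- The 36 triples on `{0,1,...,8}` from the paper. -/
def ts3nine : Fin 36 → Finset (Fin 9) :=
  ![{0,1,2}, {0,1,3}, {0,1,4}, {0,2,3}, {0,2,5}, {0,3,6}, {0,4,6}, {0,4,7}, {0,5,7},
    {0,5,8}, {0,6,8}, {0,7,8}, {1,2,4}, {1,2,5}, {1,3,6}, {1,3,8}, {1,4,7}, {1,5,6},
    {1,5,8}, {1,6,7}, {1,7,8}, {2,3,4}, {2,3,7}, {2,4,8}, {2,5,6}, {2,6,7}, {2,6,8},
    {2,7,8}, {3,4,5}, {3,4,8}, {3,5,7}, {3,5,8}, {3,6,7}, {4,5,6}, {4,5,7}, {4,6,8}]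

/-! The TS₃(9) property is a finite check. Listing the 36 pairs makes `N₂` a square matrix with
integer entries, and its determinant is nonzero because the matrix is invertible modulo 5, as
witnessed by an explicit inverse. -/

open Matrix

lemma N2_map_s6 {V ι R S : Type*} [DecidableEq V] [NonAssocSemiring R] [NonAssocSemiring S]
    (f : R →+* S) (B : ι → Finset V) : (N2 R B).map f = N2 S B := by
  ext P i
  simp only [N2, map_apply, of_apply, apply_ite f, map_one, map_zero]

lemma det_ne_zero_of_isUnit_det_map {n R S : Type*} [Fintype n] [DecidableEq n] [CommRing R]
    [CommRing S] [Nontrivial S] (f : R →+* S) {A : Matrix n n R} (h : IsUnit (A.map f).det) :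
    A.det ≠ 0 := by
  intro hA
  rw [← RingHom.mapMatrix_apply, ← RingHom.map_det, hA, map_zero] at h
  exact not_isUnit_zero h

lemma rank_map_intCast_eq_card_of_isUnit_det_map {n K S : Type*} [Fintype n] [DecidableEq n]
    [Field K] [CharZero K] [CommRing S] [Nontrivial S] (f : ℤ →+* S) {A : Matrix n n ℤ}
    (h : IsUnit (A.map f).det) : (A.map (Int.castRingHom K)).rank = Fintype.card n := by
  apply rank_of_isUnit
  rw [isUnit_iff_isUnit_det, ← RingHom.mapMatrix_apply, ← RingHom.map_det, isUnit_iff_ne_zero,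
    eq_intCast, Int.cast_ne_zero]
  exact det_ne_zero_of_isUnit_det_map f h

def pairsFin9 : Fin 36 → Finset (Fin 9) :=
  ![{0,1}, {0,2}, {0,3}, {0,4}, {0,5}, {0,6}, {0,7}, {0,8}, {1,2}, {1,3}, {1,4}, {1,5},
    {1,6}, {1,7}, {1,8}, {2,3}, {2,4}, {2,5}, {2,6}, {2,7}, {2,8}, {3,4}, {3,5}, {3,6},
    {3,7}, {3,8}, {4,5}, {4,6}, {4,7}, {4,8}, {5,6}, {5,7}, {5,8}, {6,7}, {6,8}, {7,8}]

lemma card_pairsFin9 : ∀ i, (pairsFin9 i).card = 2 := by decide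

noncomputable def pairsFin9Equiv : Fin 36 ≃ {P : Finset (Fin 9) // P.card = 2} :=
  Equiv.ofBijective (fun i => ⟨pairsFin9 i, card_pairsFin9 i⟩) <|
    (Fintype.bijective_iff_injective_and_card _).mpr ⟨by decide, by simp [Nat.choose_two_right]⟩

def ts3nineN2InvMod5 : Matrix (Fin 36) (Fin 36) (ZMod 5) :=
  !![0,2,0,4,2,3,2,2,4,0,1,0,3,0,4,3,0,1,2,1,3,2,3,2,1,1,0,3,4,2,2,1,1,2,0,1;
     2,2,3,2,2,3,2,4,1,1,1,3,0,3,3,0,3,1,2,1,0,2,0,4,4,1,3,0,1,2,2,1,4,2,3,4;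
     4,1,2,4,1,4,1,4,0,4,3,2,2,2,3,2,2,3,1,3,2,1,2,4,0,3,2,2,0,1,1,3,0,1,2,0;
     3,4,2,4,1,2,1,1,3,0,3,2,4,2,0,0,4,0,1,0,2,1,2,1,0,0,2,4,0,4,4,3,3,4,2,3;
     2,0,3,2,2,0,2,2,3,0,1,3,3,3,1,2,1,4,2,4,0,2,0,2,4,4,3,3,1,4,4,1,1,4,3,1;
     0,4,1,4,2,0,2,0,1,4,1,0,1,0,2,0,3,4,2,4,3,2,3,0,1,4,0,1,4,4,4,1,3,4,0,3;
     1,1,4,1,4,3,1,3,3,0,3,2,2,4,0,0,4,0,4,2,2,1,2,3,3,0,2,2,3,4,1,0,3,4,4,1;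
     0,3,4,1,0,3,3,3,2,1,4,1,1,4,2,3,4,2,0,0,1,3,1,3,2,2,1,1,2,0,3,2,2,0,4,4;
     1,1,4,1,4,0,4,3,3,0,3,2,4,2,0,0,4,0,1,0,2,1,2,1,0,0,2,4,0,4,4,3,3,4,2,3;
     2,4,3,2,0,0,4,0,4,0,1,0,3,0,4,3,0,1,2,1,3,2,3,2,1,1,0,3,4,2,2,1,1,2,0,1;
     4,0,0,0,4,3,2,2,1,1,1,3,2,1,3,0,3,1,4,4,0,2,0,2,1,1,3,2,3,2,0,4,4,2,1,1;
     4,1,2,3,1,2,4,4,0,4,3,2,0,4,3,2,2,3,4,0,2,1,2,1,3,3,2,0,3,1,3,0,0,1,4,3;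
     4,2,3,2,2,3,2,4,4,3,4,0,3,0,1,0,3,1,2,1,0,2,0,4,4,1,3,0,1,2,2,1,4,2,3,4;
     1,1,2,4,1,4,1,4,3,2,0,0,4,0,0,2,2,3,1,3,2,1,2,4,0,3,2,2,0,1,1,3,0,1,2,0;
     4,0,0,0,4,0,2,2,1,1,1,3,0,1,3,0,3,1,2,4,0,2,0,0,1,1,3,0,3,2,2,4,4,4,3,1;
     4,3,2,3,4,2,1,4,3,4,3,4,0,1,4,0,4,3,1,0,0,1,0,1,0,3,4,0,1,1,1,0,2,4,4,0;
     2,2,0,4,2,3,2,2,1,3,4,3,0,3,1,3,0,1,2,1,3,2,3,2,1,1,0,3,4,2,2,1,1,2,0,1;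
     3,0,1,0,1,4,0,0,2,1,2,4,4,3,2,4,1,4,3,4,1,0,4,0,2,2,1,1,0,3,3,4,4,3,1,0;
     1,4,2,1,3,2,4,1,0,2,3,2,2,2,3,4,2,3,1,3,2,4,4,1,3,0,2,2,0,1,1,3,1,1,2,0;
     3,0,4,0,0,1,3,3,2,3,2,3,2,1,0,1,1,0,0,2,4,3,1,0,2,2,1,4,2,0,0,2,2,3,1,4;
     0,3,1,1,3,1,0,0,2,4,4,4,3,2,4,1,4,4,3,2,3,0,1,3,2,2,4,3,4,3,3,2,2,0,4,0;
     4,1,2,1,1,4,1,4,0,4,0,2,2,2,3,2,0,3,1,3,2,4,2,4,0,3,4,0,3,3,1,3,0,1,2,0;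
     3,0,1,0,3,4,3,0,2,1,2,1,4,1,2,4,1,2,3,2,1,0,1,0,0,2,4,1,2,3,0,4,2,0,1,2;
     2,2,0,2,2,3,2,2,1,3,1,3,0,3,1,3,3,1,2,1,3,4,3,2,1,1,3,0,1,0,2,1,1,2,0,1;
     2,4,0,4,2,1,2,4,4,3,4,2,3,2,4,1,2,4,2,3,3,2,3,4,1,3,0,0,4,0,0,1,4,0,0,4;
     1,4,2,4,1,4,1,4,0,2,0,0,4,0,0,4,0,0,4,1,4,1,2,4,0,3,2,2,0,1,1,3,0,1,2,0;
     2,2,3,2,2,0,2,2,1,0,1,3,3,3,1,0,3,1,0,1,3,2,0,2,4,4,3,3,1,4,4,1,1,4,3,1;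
     1,1,2,1,1,2,1,1,3,2,3,4,2,4,3,2,4,3,3,3,0,4,2,1,0,0,4,2,3,1,4,3,3,4,2,3;
     2,4,0,4,0,1,2,4,4,3,4,0,3,2,4,1,2,1,2,3,3,2,1,4,1,3,3,0,4,0,2,3,1,0,0,4;
     4,0,3,0,4,0,2,2,1,3,1,3,0,1,3,2,3,1,2,4,0,0,2,2,4,4,3,0,3,2,2,4,4,4,3,1;
     1,4,0,4,3,1,1,2,0,4,0,2,2,0,3,1,0,3,1,1,2,4,2,4,3,3,4,0,0,3,1,1,0,3,2,2;
     2,2,0,2,2,3,2,4,1,3,1,3,0,3,3,3,3,1,2,1,0,4,3,2,1,4,3,0,1,2,2,1,4,2,3,4;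
     1,1,4,1,4,0,1,3,3,0,3,2,4,4,0,0,4,0,1,2,2,1,2,1,3,0,2,4,3,4,4,0,3,2,2,1;
     0,1,4,1,2,0,3,1,4,1,4,4,3,0,4,0,2,2,0,3,1,3,3,1,2,0,4,4,1,2,3,0,2,2,4,1;
     3,0,1,0,3,4,0,0,2,1,2,1,4,3,2,4,1,2,3,4,1,0,1,0,2,2,4,1,0,3,0,2,2,3,1,0;
     4,3,2,3,4,2,1,1,3,4,3,4,0,1,1,0,4,3,1,0,2,1,0,1,0,0,4,0,1,4,1,0,0,4,2,3]

set_option maxRecDepth 100000 in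
set_option maxHeartbeats 2000000 in
lemma N2_ts3nine_mul_invMod5 :
    (N2 (ZMod 5) ts3nine).submatrix pairsFin9Equiv id * ts3nineN2InvMod5 = 1 := by
  let : DecidablePred fun i : Fin 36 => ∀ j : Fin 36,
      ((N2 (ZMod 5) ts3nine).submatrix pairsFin9Equiv id * ts3nineN2InvMod5) i j =
        (1 : Matrix (Fin 36) (Fin 36) (ZMod 5)) i j :=
    fun _ => inferInstance
  ext i j
  revert i j
  decide

set_option maxRecDepth 100000 in
lemma isPBD_ts3nine : IsPBD ts3nine 3 {3} := ⟨by decide, by decide⟩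

/-- The listed 36 triples form a `TS_3(9)`, its matrix `N₂` is a 36 × 36 matrix, and
`N₂` is nonsingular (of full rank 36) over the rationals. -/
theorem ts3nine_is_ts3_and_N2_nonsingular :
    IsPBD ts3nine 3 {3} ∧
    Fintype.card {P : Finset (Fin 9) // P.card = 2} = 36 ∧
    (N2 ℚ ts3nine).rank = 36 := by
  refine ⟨isPBD_ts3nine, by simp [Nat.choose_two_right], ?_⟩
  rw [← rank_submatrix _ pairsFin9Equiv (Equiv.refl _), ← N2_map_s6 (Int.castRingHom ℚ),
    submatrix_map]
  have : Fact (1 < 5) := ⟨by norm_num⟩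
  refine rank_map_intCast_eq_card_of_isUnit_det_map (Int.castRingHom (ZMod 5)) ?_
  rw [← submatrix_map, N2_map_s6]
  exact isUnit_det_of_right_inverse N2_ts3nine_mul_invMod5
end

section
/- Let v be an odd integer with v ≥ 5, and suppose there exists a pairwise balanced design PBD(v,{5,7,9}) (index 1). Then there exists a trade-free threefold triple system TS_3(v); in particular, one with no repeated blocks. -/
open Finset

/-- A block system is trade-free if there do not exist two distinct sub-multisets of
its multiset of blocks covering every 2-element subset of the point set the same
number of times (counted with multiplicity). -/
def TradeFree {V : Type*} [DecidableEq V] {ι : Type*} [Fintype ι]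
    (B : ι → Finset V) : Prop :=
  ∀ A1 A2 : Multiset (Finset V),
    A1 ≤ Multiset.map B Finset.univ.val → A2 ≤ Multiset.map B Finset.univ.val →
    (∀ p : Finset V, p.card = 2 →
      Multiset.countP (fun e => p ⊆ e) A1 = Multiset.countP (fun e => p ⊆ e) A2) →
    A1 = A2

/-!
Break every block of the PBD into a copy of a fixed TS₃(k), k ∈ {5, 7, 9}, whose pair–triple
incidence matrix `N2` has linearly independent columns over `ZMod 5`. A pair of points lies in a
single block of the PBD, so the incidence matrix of the resulting TS₃(v) is block diagonal and its
columns stay independent. A trade would be two distinct 0/1 vectors with the same image under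
`N2`, so a block system with independent columns is trade-free and has no repeated blocks.
-/

open Matrix

theorem eq_map_filter_of_le_map_univ {α β : Type*} [Fintype α] [DecidableEq β] {f : α → β}
    (hf : Function.Injective f) {s : Multiset β} (hs : s ≤ univ.val.map f) :
    s = (univ.filter fun a => f a ∈ s).val.map f := by
  have hnd : (univ.val.map f).Nodup := univ.nodup.map hf
  refine (Multiset.Nodup.ext (Multiset.nodup_of_le hs hnd) ((univ.filter _).nodup.map hf)).2
    fun b => ⟨fun hb => ?_, fun hb => ?_⟩
  · obtain ⟨a, -, rfl⟩ := Multiset.mem_map.1 (Multiset.mem_of_le hs hb)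
    exact Multiset.mem_map.2 ⟨a, by simpa using hb, rfl⟩
  · obtain ⟨a, ha, rfl⟩ := Multiset.mem_map.1 hb
    simpa using ha

section Incidence

variable {V ι : Type*} [DecidableEq V]

theorem IsPBD.comp_equiv [Fintype ι] {ι' : Type*} [Fintype ι'] {B : ι → Finset V} {lam : ℕ}
    {K : Set ℕ} (h : IsPBD B lam K) (e : ι' ≃ ι) : IsPBD (B ∘ e) lam K :=
  ⟨fun i => h.1 (e i), fun P hP => by
    rw [← h.2 P hP]
    exact card_equiv e (by simp)⟩

theorem IsPBD.eq_of_subset [Fintype ι] {B : ι → Finset V} {K : Set ℕ} (h : IsPBD B 1 K)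
    {P : Finset V} (hP : P.card = 2) {i j : ι} (hi : P ⊆ B i) (hj : P ⊆ B j) : i = j :=
  card_le_one.mp (h.2 P hP).le i (by simpa using hi) j (by simpa using hj)

theorem IsPBD.card_filter_map {α : Type*} [DecidableEq α] [Fintype α] [Fintype ι]
    {T : ι → Finset α} {lam : ℕ} {K : Set ℕ} (h : IsPBD T lam K) (f : α ↪ V)
    {P : Finset V} (hP : P.card = 2) (hPf : P ⊆ univ.map f) :
    (univ.filter fun i => P ⊆ (T i).map f).card = lam := by
  obtain ⟨Q, -, rfl⟩ := subset_map_iff.1 hPf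
  simpa only [map_subset_map] using h.2 Q (by simpa using hP)

variable {F : Type*} [CommSemiring F]

theorem injective_of_linearIndependent_N2 [Nontrivial F] {B : ι → Finset V}
    (h : LinearIndependent F (N2 F B).col) : Function.Injective B :=
  fun i j hij => h.injective (funext fun P => by simp [col, N2, hij])

theorem N2_mulVec_indicator [Fintype ι] [DecidableEq ι] (B : ι → Finset V) (s : Finset ι)
    (P : {P : Finset V // P.card = 2}) :
    (N2 F B *ᵥ fun i => if i ∈ s then 1 else 0) P =
      ((s.val.map B).countP fun e => (P : Finset V) ⊆ e : F) := by
  simp only [mulVec, dotProduct, N2, of_apply, mul_ite, mul_one, mul_zero, sum_ite_mem,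
    univ_inter, sum_boole, Multiset.countP_map]
  rfl

theorem tradeFree_of_linearIndependent [Fintype ι] [Nontrivial F] {B : ι → Finset V}
    (h : LinearIndependent F (N2 F B).col) : TradeFree B := by
  classical
  intro A₁ A₂ h₁ h₂ hcount
  have hB := injective_of_linearIndependent_N2 h
  rw [eq_map_filter_of_le_map_univ hB h₁, eq_map_filter_of_le_map_univ hB h₂] at hcount ⊢
  set s₁ := univ.filter fun i => B i ∈ A₁
  set s₂ := univ.filter fun i => B i ∈ A₂
  have hind : (fun i => if i ∈ s₁ then (1 : F) else 0) = fun i => if i ∈ s₂ then 1 else 0 :=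
    mulVec_injective_iff.mpr h <| funext fun P => by
      rw [N2_mulVec_indicator, N2_mulVec_indicator, hcount P P.2]
  congr 2
  ext i
  have := congrFun hind i
  by_cases h₁ : i ∈ s₁ <;> by_cases h₂ : i ∈ s₂ <;> simp_all

theorem linearIndependent_N2_of_mul_eq_one [Fintype ι] [DecidableEq ι] {κ : Type*}
    [Fintype κ] {B : ι → Finset V} (pairs : κ → {P : Finset V // P.card = 2})
    (M : Matrix ι κ F) (hM : M * (N2 F B).submatrix pairs id = 1) :
    LinearIndependent F (N2 F B).col := by
  rw [← mulVec_injective_iff]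
  intro x y hxy
  have hinv : ∀ z, M *ᵥ ((N2 F B *ᵥ z) ∘ pairs) = z := fun z => by
    rw [show (N2 F B *ᵥ z) ∘ pairs = (N2 F B).submatrix pairs id *ᵥ z from rfl,
      mulVec_mulVec, hM, one_mulVec]
  rw [← hinv x, ← hinv y, hxy]

theorem linearIndependent_N2_map [Fintype ι] {α : Type*} [DecidableEq α] {T : ι → Finset α}
    (f : α ↪ V) (h : LinearIndependent F (N2 F T).col) :
    LinearIndependent F (N2 F fun i => (T i).map f).col := by
  rw [← mulVec_injective_iff] at h ⊢
  intro x y hxy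
  refine h (funext fun P => ?_)
  have := congrFun hxy ⟨P.1.map f, by simp [P.2]⟩
  simpa [mulVec, dotProduct, N2, map_subset_map] using this

end Incidence

section Sigma

variable {V ι : Type*} [DecidableEq V] [Fintype ι] {κ : ι → Type*} [∀ i, Fintype (κ i)]
  {A : ι → Finset V} {L : (i : ι) → κ i → Finset V}

theorem isPBD_sigma {lam : ℕ} {K K' : Set ℕ} (hA : IsPBD A 1 K) (hsub : ∀ i t, L i t ⊆ A i)
    (hcard : ∀ i t, (L i t).card ∈ K')
    (hcov : ∀ i (P : Finset V), P.card = 2 → P ⊆ A i →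
      (univ.filter fun t => P ⊆ L i t).card = lam) :
    IsPBD (Sigma.uncurry L) lam K' := by
  refine ⟨fun x => hcard x.1 x.2, fun P hP => ?_⟩
  obtain ⟨i₀, hi₀⟩ := card_eq_one.mp (hA.2 P hP)
  have hPi₀ : P ⊆ A i₀ := by
    simpa using (Finset.ext_iff.mp hi₀ i₀).2 (mem_singleton_self i₀)
  rw [card_filter, Fintype.sum_sigma, sum_eq_single i₀, ← card_filter]
  · exact hcov i₀ P hP hPi₀
  · intro i _ hi
    exact sum_eq_zero fun t _ =>
      if_neg fun hPt => hi (hA.eq_of_subset hP (hPt.trans (hsub i t)) hPi₀)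
  · simp

variable {F : Type*} [CommSemiring F]

theorem N2_mulVec_comp_sigmaMk
    (hA : ∀ P : Finset V, P.card = 2 → ∀ i j, P ⊆ A i → P ⊆ A j → i = j)
    (hsub : ∀ i t, L i t ⊆ A i) (z : (Σ i, κ i) → F) (i : ι)
    (P : {P : Finset V // P.card = 2}) :
    (N2 F (L i) *ᵥ fun t => z ⟨i, t⟩) P =
      if P.1 ⊆ A i then (N2 F (Sigma.uncurry L) *ᵥ z) P else 0 := by
  split_ifs with hP
  · simp only [mulVec, dotProduct, Fintype.sum_sigma]
    rw [sum_eq_single i]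
    · rfl
    · intro j _ hj
      refine sum_eq_zero fun t _ => ?_
      simp only [N2, of_apply, ite_mul, one_mul, zero_mul]
      exact if_neg fun hPt => hj (hA P P.2 j i (hPt.trans (hsub j t)) hP)
    · simp
  · refine sum_eq_zero fun t _ => ?_
    simp only [N2, of_apply, ite_mul, one_mul, zero_mul]
    exact if_neg fun hPt => hP (hPt.trans (hsub i t))

theorem linearIndependent_N2_sigma
    (hA : ∀ P : Finset V, P.card = 2 → ∀ i j, P ⊆ A i → P ⊆ A j → i = j)
    (hsub : ∀ i t, L i t ⊆ A i) (hL : ∀ i, LinearIndependent F (N2 F (L i)).col) :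
    LinearIndependent F (N2 F (Sigma.uncurry L)).col := by
  simp_rw [← mulVec_injective_iff] at hL ⊢
  intro x y hxy
  funext ⟨i, t⟩
  have hxyi : (fun t => x ⟨i, t⟩) = fun t => y ⟨i, t⟩ := hL i <| funext fun P => by
    rw [N2_mulVec_comp_sigmaMk hA hsub, N2_mulVec_comp_sigmaMk hA hsub, hxy]
  exact congrFun hxyi t

end Sigma

theorem exists_isPBD_linearIndependent_of_isPBD {V ι F : Type*} [DecidableEq V] [LinearOrder V]
    [Fintype ι] [CommSemiring F] {A : ι → Finset V} {lam : ℕ} {K K' : Set ℕ}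
    (hA : IsPBD A 1 K)
    (hloc : ∀ k ∈ K, ∃ (n : ℕ) (T : Fin n → Finset (Fin k)),
      IsPBD T lam K' ∧ LinearIndependent F (N2 F T).col) :
    ∃ (n : ℕ) (B : Fin n → Finset V),
      IsPBD B lam K' ∧ LinearIndependent F (N2 F B).col := by
  choose! n T hT using hloc
  let f i : Fin (A i).card ↪ V := ((A i).orderEmbOfFin rfl).toEmbedding
  let L i (t : Fin (n (A i).card)) : Finset V := (T _ t).map (f i)
  have hsub : ∀ i t, L i t ⊆ A i := fun i t =>
    (map_subset_map.2 (subset_univ _)).trans (map_orderEmbOfFin_univ (A i) rfl).subset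
  have hB := isPBD_sigma hA hsub (fun i t => by simpa [L] using (hT _ (hA.1 i)).1.1 t)
    fun i P hP hPA => (hT _ (hA.1 i)).1.card_filter_map (f i) hP (by simpa [f] using hPA)
  have hind := linearIndependent_N2_sigma (fun P hP _ _ => hA.eq_of_subset hP) hsub
    fun i => linearIndependent_N2_map (f i) (hT _ (hA.1 i)).2
  let e := Fintype.equivFin (Σ i, Fin (n (A i).card))
  exact ⟨_, _, hB.comp_equiv e.symm, hind.comp e.symm e.symm.injective⟩

/- The triple systems `triples5`, `triples7`, `triples9` and the matrices `leftInverse5`, ...,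
left inverses over `ZMod 5` of `N2` restricted to the rows `pairs5`, ..., were found by computer. -/

def triples5 : Fin 10 → Finset (Fin 5) := ![
  {0, 1, 2}, {0, 1, 3}, {0, 1, 4}, {0, 2, 3}, {0, 2, 4}, {0, 3, 4}, {1, 2, 3}, {1, 2, 4},
  {1, 3, 4}, {2, 3, 4}]

def pairs5 : Fin 10 → {P : Finset (Fin 5) // P.card = 2} := fun q =>
  ⟨![
  {0, 1}, {0, 2}, {0, 3}, {0, 4}, {1, 2}, {1, 3}, {1, 4}, {2, 3}, {2, 4}, {3, 4}] q,
    by revert q; decide⟩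

def leftInverse5 : Matrix (Fin 10) (Fin 10) (ZMod 5) := !![
  2, 2, 4, 4, 2, 4, 4, 4, 4, 2;
  2, 4, 2, 4, 4, 2, 4, 4, 2, 4;
  2, 4, 4, 2, 4, 4, 2, 2, 4, 4;
  4, 2, 2, 4, 4, 4, 2, 2, 4, 4;
  4, 2, 4, 2, 4, 2, 4, 4, 2, 4;
  4, 4, 2, 2, 2, 4, 4, 4, 4, 2;
  4, 4, 4, 2, 2, 2, 4, 2, 4, 4;
  4, 4, 2, 4, 2, 4, 2, 4, 2, 4;
  4, 2, 4, 4, 4, 2, 2, 4, 4, 2;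
  2, 4, 4, 4, 4, 4, 4, 2, 2, 2]

def triples7 : Fin 21 → Finset (Fin 7) := ![
  {0, 1, 3}, {0, 1, 5}, {0, 1, 6}, {0, 2, 3}, {0, 2, 4}, {0, 2, 5}, {0, 3, 6}, {0, 4, 5},
  {0, 4, 6}, {1, 2, 4}, {1, 2, 5}, {1, 2, 6}, {1, 3, 4}, {1, 3, 5}, {1, 4, 6}, {2, 3, 4},
  {2, 3, 6}, {2, 5, 6}, {3, 4, 5}, {3, 5, 6}, {4, 5, 6}]

def pairs7 : Fin 21 → {P : Finset (Fin 7) // P.card = 2} := fun q =>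
  ⟨![
  {0, 1}, {0, 2}, {0, 3}, {0, 4}, {0, 5}, {0, 6}, {1, 2}, {1, 3}, {1, 4}, {1, 5}, {1, 6}, {2, 3},
  {2, 4}, {2, 5}, {2, 6}, {3, 4}, {3, 5}, {3, 6}, {4, 5}, {4, 6}, {5, 6}] q,
    by revert q; decide⟩

def leftInverse7 : Matrix (Fin 21) (Fin 21) (ZMod 5) := !![
  1, 2, 0, 4, 3, 1, 4, 0, 2, 1, 3, 3, 4, 0, 3, 3, 4, 4, 3, 0, 2;
  0, 4, 4, 3, 0, 3, 3, 1, 4, 1, 2, 2, 3, 1, 0, 0, 3, 3, 2, 4, 4;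
  0, 4, 1, 3, 2, 1, 3, 4, 4, 3, 0, 0, 3, 4, 2, 2, 3, 3, 0, 1, 4;
  3, 0, 0, 4, 3, 4, 4, 2, 0, 4, 3, 1, 1, 2, 3, 3, 4, 1, 3, 2, 0;
  4, 1, 3, 0, 1, 2, 2, 3, 3, 0, 4, 1, 0, 3, 4, 4, 2, 0, 4, 3, 3;
  3, 0, 2, 1, 1, 4, 4, 0, 2, 1, 3, 3, 4, 0, 3, 3, 4, 4, 3, 0, 2;
  1, 3, 1, 2, 4, 0, 2, 3, 3, 0, 4, 1, 0, 3, 4, 4, 2, 0, 4, 3, 3;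
  2, 1, 4, 1, 0, 3, 3, 4, 4, 3, 0, 0, 3, 4, 2, 2, 3, 3, 0, 1, 4;
  4, 3, 3, 0, 4, 0, 0, 3, 3, 2, 1, 4, 2, 3, 4, 4, 0, 2, 1, 1, 3;
  4, 3, 3, 2, 4, 0, 0, 3, 1, 2, 1, 4, 0, 3, 4, 1, 0, 2, 4, 3, 3;
  4, 3, 3, 0, 1, 2, 0, 3, 3, 0, 4, 4, 2, 1, 1, 4, 2, 0, 4, 3, 3;
  2, 4, 4, 3, 0, 3, 1, 4, 1, 3, 0, 2, 3, 1, 0, 0, 3, 3, 2, 4, 4;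
  3, 0, 2, 4, 3, 4, 4, 0, 0, 4, 3, 3, 1, 2, 3, 1, 1, 4, 3, 2, 0;
  1, 3, 3, 2, 4, 0, 2, 1, 3, 0, 4, 4, 0, 3, 4, 1, 0, 2, 4, 3, 3;
  3, 2, 0, 4, 3, 1, 1, 2, 0, 4, 1, 3, 4, 0, 3, 3, 4, 4, 3, 0, 2;
  2, 1, 4, 3, 0, 3, 3, 4, 1, 3, 0, 0, 1, 4, 2, 0, 3, 3, 2, 4, 4;
  0, 4, 1, 3, 2, 3, 3, 4, 4, 3, 2, 0, 3, 4, 0, 2, 3, 1, 0, 4, 1;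
  3, 2, 0, 4, 3, 4, 1, 2, 0, 4, 3, 3, 4, 0, 1, 3, 4, 1, 3, 2, 0;
  0, 4, 4, 3, 2, 3, 3, 1, 4, 3, 2, 2, 3, 4, 0, 0, 1, 3, 0, 4, 1;
  4, 3, 3, 0, 4, 2, 0, 3, 3, 2, 4, 4, 2, 3, 1, 4, 0, 0, 1, 3, 1;
  3, 0, 2, 1, 3, 4, 4, 0, 2, 4, 3, 3, 4, 2, 3, 3, 1, 4, 1, 0, 0]

def triples9 : Fin 36 → Finset (Fin 9) := ![
  {0, 1, 2}, {0, 1, 7}, {0, 1, 8}, {0, 2, 5}, {0, 2, 6}, {0, 3, 4}, {0, 3, 6}, {0, 3, 7},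
  {0, 4, 5}, {0, 4, 6}, {0, 5, 8}, {0, 7, 8}, {1, 2, 3}, {1, 2, 8}, {1, 3, 5}, {1, 3, 7},
  {1, 4, 5}, {1, 4, 6}, {1, 4, 7}, {1, 5, 6}, {1, 6, 8}, {2, 3, 5}, {2, 3, 8}, {2, 4, 6},
  {2, 4, 7}, {2, 4, 8}, {2, 5, 7}, {2, 6, 7}, {3, 4, 7}, {3, 4, 8}, {3, 5, 6}, {3, 6, 8},
  {4, 5, 8}, {5, 6, 7}, {5, 7, 8}, {6, 7, 8}]

def pairs9 : Fin 36 → {P : Finset (Fin 9) // P.card = 2} := fun q =>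
  ⟨![
  {0, 1}, {0, 2}, {0, 3}, {0, 4}, {0, 5}, {0, 6}, {0, 7}, {0, 8}, {1, 2}, {1, 3}, {1, 4}, {1, 5},
  {1, 6}, {1, 7}, {1, 8}, {2, 3}, {2, 4}, {2, 5}, {2, 6}, {2, 7}, {2, 8}, {3, 4}, {3, 5}, {3, 6},
  {3, 7}, {3, 8}, {4, 5}, {4, 6}, {4, 7}, {4, 8}, {5, 6}, {5, 7}, {5, 8}, {6, 7}, {6, 8}, {7, 8}] q,
    by revert q; decide⟩

def leftInverse9 : Matrix (Fin 36) (Fin 36) (ZMod 5) := !![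
  4, 3, 3, 1, 2, 3, 4, 0, 4, 0, 2, 1, 2, 2, 1, 1, 0, 0, 4, 4, 0, 1, 4, 4, 3, 4, 2, 1, 1, 0, 2, 1, 3, 2, 2, 1;
  0, 4, 0, 1, 2, 4, 0, 4, 1, 4, 3, 0, 2, 1, 1, 0, 3, 4, 2, 1, 3, 4, 1, 1, 0, 2, 2, 0, 1, 4, 3, 0, 4, 2, 2, 1;
  2, 3, 2, 3, 1, 3, 1, 1, 0, 1, 0, 4, 1, 2, 3, 4, 2, 1, 4, 0, 2, 0, 0, 0, 2, 4, 1, 4, 3, 1, 0, 4, 3, 1, 1, 3;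
  0, 1, 1, 2, 3, 4, 3, 0, 4, 2, 1, 4, 0, 2, 0, 4, 1, 2, 0, 2, 1, 2, 4, 0, 1, 0, 0, 4, 2, 3, 1, 1, 2, 3, 0, 2;
  1, 2, 1, 2, 0, 3, 3, 0, 2, 3, 2, 0, 3, 1, 4, 0, 4, 3, 1, 4, 4, 2, 2, 1, 1, 1, 3, 0, 2, 2, 2, 3, 0, 0, 3, 2;
  2, 2, 3, 4, 4, 1, 2, 2, 1, 4, 3, 0, 2, 1, 1, 0, 3, 4, 2, 1, 3, 4, 1, 1, 0, 2, 2, 0, 1, 4, 3, 0, 4, 2, 2, 1;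
  0, 3, 4, 4, 3, 2, 0, 3, 2, 4, 3, 4, 3, 0, 2, 4, 1, 4, 0, 2, 1, 2, 2, 0, 1, 0, 3, 4, 2, 3, 3, 4, 4, 3, 0, 2;
  3, 0, 4, 2, 3, 2, 3, 0, 2, 2, 4, 1, 0, 4, 2, 1, 1, 2, 3, 2, 1, 4, 2, 4, 4, 3, 0, 1, 2, 3, 4, 1, 2, 0, 3, 2;
  4, 3, 2, 3, 4, 3, 1, 1, 3, 3, 2, 4, 4, 0, 0, 4, 2, 3, 4, 0, 2, 0, 3, 0, 2, 4, 4, 4, 3, 1, 2, 2, 0, 1, 1, 3;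
  4, 0, 0, 4, 2, 1, 2, 2, 1, 3, 0, 1, 4, 4, 4, 1, 0, 3, 4, 4, 0, 1, 1, 4, 3, 4, 4, 1, 1, 0, 0, 3, 1, 2, 2, 1;
  1, 1, 2, 0, 4, 3, 1, 4, 3, 0, 2, 2, 1, 3, 0, 2, 2, 0, 1, 3, 2, 3, 3, 0, 2, 1, 1, 2, 0, 1, 2, 2, 3, 1, 4, 0;
  2, 1, 1, 2, 0, 4, 3, 1, 2, 4, 3, 4, 3, 0, 2, 4, 1, 4, 0, 2, 1, 2, 2, 0, 1, 0, 3, 4, 2, 3, 3, 4, 4, 3, 0, 2;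
  3, 0, 1, 2, 3, 2, 3, 0, 2, 0, 4, 1, 0, 4, 2, 4, 1, 2, 3, 2, 1, 2, 4, 2, 1, 0, 0, 1, 2, 3, 4, 1, 2, 0, 3, 2;
  3, 2, 1, 2, 0, 0, 3, 0, 0, 0, 4, 3, 3, 4, 2, 0, 4, 3, 3, 4, 4, 2, 2, 4, 1, 1, 3, 3, 2, 2, 4, 3, 0, 3, 0, 2;
  2, 2, 3, 1, 2, 1, 2, 2, 1, 4, 0, 3, 2, 1, 1, 0, 0, 1, 2, 1, 3, 1, 4, 1, 0, 2, 2, 3, 4, 2, 0, 3, 1, 2, 2, 1;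
  0, 3, 1, 2, 0, 2, 0, 3, 2, 2, 1, 1, 3, 0, 2, 1, 4, 2, 0, 2, 1, 2, 2, 2, 4, 3, 3, 1, 4, 0, 1, 1, 2, 3, 0, 2;
  4, 0, 0, 1, 2, 1, 2, 2, 1, 3, 3, 1, 4, 4, 4, 1, 3, 3, 4, 4, 0, 4, 1, 4, 3, 4, 2, 3, 3, 2, 0, 3, 1, 2, 2, 1;
  1, 2, 1, 2, 0, 0, 3, 0, 2, 3, 2, 0, 1, 1, 4, 0, 4, 3, 3, 4, 4, 2, 2, 4, 1, 1, 3, 3, 2, 2, 4, 3, 0, 3, 0, 2;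
  0, 3, 4, 2, 3, 4, 0, 3, 2, 4, 1, 4, 0, 0, 2, 4, 3, 4, 3, 2, 1, 4, 2, 2, 1, 0, 0, 4, 0, 1, 1, 4, 4, 0, 3, 2;
  4, 3, 2, 3, 1, 3, 1, 1, 3, 3, 2, 2, 4, 0, 0, 4, 2, 1, 4, 0, 2, 0, 0, 0, 2, 4, 1, 4, 3, 1, 0, 4, 3, 1, 1, 3;
  0, 0, 2, 0, 4, 2, 1, 4, 0, 4, 1, 3, 1, 4, 1, 1, 4, 1, 3, 1, 4, 3, 3, 1, 2, 0, 1, 3, 0, 2, 1, 3, 2, 1, 4, 0;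
  2, 4, 0, 4, 4, 4, 2, 2, 4, 1, 3, 0, 0, 1, 1, 0, 1, 2, 2, 3, 0, 1, 4, 1, 3, 0, 2, 2, 1, 4, 0, 0, 4, 0, 4, 1;
  0, 1, 4, 4, 3, 4, 0, 3, 4, 4, 3, 4, 0, 0, 2, 2, 3, 1, 0, 0, 4, 2, 2, 2, 1, 0, 3, 2, 2, 3, 1, 4, 4, 0, 3, 2;
  0, 3, 4, 4, 3, 4, 0, 3, 2, 4, 3, 4, 0, 0, 2, 4, 1, 4, 3, 2, 1, 2, 2, 2, 1, 0, 3, 2, 2, 3, 1, 4, 4, 0, 3, 2;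
  3, 0, 1, 2, 0, 0, 3, 0, 2, 0, 4, 3, 3, 4, 2, 3, 2, 0, 0, 2, 1, 2, 2, 4, 1, 1, 3, 3, 2, 2, 4, 3, 0, 3, 0, 2;
  2, 2, 0, 4, 2, 1, 2, 2, 1, 1, 3, 3, 2, 1, 1, 3, 3, 1, 2, 1, 3, 1, 1, 4, 3, 4, 4, 0, 1, 0, 0, 3, 1, 2, 2, 1;
  3, 0, 4, 4, 3, 2, 0, 3, 2, 2, 1, 1, 0, 2, 4, 1, 3, 2, 3, 0, 4, 2, 2, 4, 1, 0, 3, 4, 2, 3, 4, 4, 4, 2, 1, 2;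
  4, 0, 0, 4, 2, 3, 2, 2, 1, 3, 0, 1, 2, 4, 4, 1, 0, 3, 2, 4, 0, 1, 1, 2, 3, 4, 4, 3, 1, 0, 2, 3, 1, 0, 4, 1;
  2, 2, 0, 1, 2, 1, 2, 2, 1, 1, 0, 3, 2, 1, 1, 3, 0, 1, 2, 1, 3, 4, 1, 4, 3, 4, 2, 3, 4, 2, 0, 3, 1, 2, 2, 1;
  1, 1, 2, 0, 4, 3, 1, 1, 3, 0, 2, 2, 1, 3, 3, 2, 2, 0, 1, 3, 4, 3, 3, 0, 2, 4, 1, 2, 0, 4, 2, 2, 0, 1, 1, 3;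
  1, 4, 2, 0, 4, 0, 1, 1, 0, 0, 2, 2, 3, 3, 3, 0, 4, 2, 1, 1, 2, 3, 3, 3, 2, 3, 1, 0, 0, 4, 0, 2, 0, 3, 4, 3;
  4, 3, 4, 1, 3, 3, 4, 1, 3, 1, 0, 4, 4, 2, 0, 1, 0, 4, 4, 2, 2, 0, 0, 3, 2, 2, 1, 1, 3, 3, 2, 4, 1, 4, 1, 0;
  2, 2, 3, 1, 4, 1, 2, 2, 1, 4, 0, 0, 2, 1, 1, 0, 0, 4, 2, 1, 3, 1, 1, 1, 0, 2, 0, 3, 4, 2, 3, 0, 4, 2, 2, 1;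
  0, 3, 1, 2, 0, 2, 3, 3, 2, 2, 1, 1, 3, 2, 2, 1, 4, 2, 0, 4, 1, 2, 2, 2, 1, 3, 3, 1, 2, 0, 1, 4, 2, 1, 0, 4;
  2, 2, 0, 4, 2, 1, 2, 4, 1, 1, 3, 3, 2, 1, 4, 3, 3, 1, 2, 1, 0, 1, 1, 4, 3, 2, 4, 0, 1, 2, 0, 3, 4, 2, 4, 4;
  1, 2, 4, 4, 3, 0, 0, 0, 2, 0, 4, 3, 0, 4, 4, 3, 1, 0, 3, 2, 4, 2, 2, 1, 1, 3, 3, 1, 2, 0, 2, 3, 2, 0, 1, 0]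

theorem isPBD_triples5 : IsPBD triples5 3 {3} :=
  ⟨by simp only [Set.mem_singleton_iff]; decide, by decide⟩

set_option maxRecDepth 10000 in
theorem isPBD_triples7 : IsPBD triples7 3 {3} :=
  ⟨by simp only [Set.mem_singleton_iff]; decide, by decide⟩

set_option maxRecDepth 10000 in
theorem isPBD_triples9 : IsPBD triples9 3 {3} :=
  ⟨by simp only [Set.mem_singleton_iff]; decide, by decide⟩

theorem linearIndependent_triples5 : LinearIndependent (ZMod 5) (N2 (ZMod 5) triples5).col :=
  linearIndependent_N2_of_mul_eq_one pairs5 leftInverse5 (by decide)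

set_option maxRecDepth 10000 in
theorem linearIndependent_triples7 : LinearIndependent (ZMod 5) (N2 (ZMod 5) triples7).col :=
  linearIndependent_N2_of_mul_eq_one pairs7 leftInverse7 (by decide)

set_option maxRecDepth 10000 in
theorem linearIndependent_triples9 : LinearIndependent (ZMod 5) (N2 (ZMod 5) triples9).col :=
  linearIndependent_N2_of_mul_eq_one pairs9 leftInverse9 (by decide)

theorem exists_ts3_linearIndependent_zmod5 : ∀ k ∈ ({5, 7, 9} : Set ℕ),
    ∃ (n : ℕ) (T : Fin n → Finset (Fin k)),
      IsPBD T 3 {3} ∧ LinearIndependent (ZMod 5) (N2 (ZMod 5) T).col := by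
  rintro k (rfl | rfl | rfl)
  exacts [⟨_, _, isPBD_triples5, linearIndependent_triples5⟩,
    ⟨_, _, isPBD_triples7, linearIndependent_triples7⟩,
    ⟨_, _, isPBD_triples9, linearIndependent_triples9⟩]

theorem tradeFree_ts3_of_pbd579_general (v : ℕ)
    (hPBD : ∃ (n : ℕ) (A : Fin n → Finset (Fin v)), IsPBD A 1 {5, 7, 9}) :
    ∃ (n : ℕ) (B : Fin n → Finset (Fin v)),
      IsPBD B 3 {3} ∧ TradeFree B ∧ Function.Injective B := by
  obtain ⟨_, A, hA⟩ := hPBD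
  obtain ⟨n, B, hB, hind⟩ :=
    exists_isPBD_linearIndependent_of_isPBD hA exists_ts3_linearIndependent_zmod5
  have : Fact (1 < 5) := ⟨by norm_num⟩
  exact ⟨n, B, hB, tradeFree_of_linearIndependent hind, injective_of_linearIndependent_N2 hind⟩

/-- If `v ≥ 5` is odd and a `PBD(v, {5,7,9})` (index 1) exists, then there exists a
trade-free threefold triple system `TS_3(v)`; in particular one with no repeated
blocks. -/
theorem tradeFree_ts3_of_pbd579 (v : ℕ) (hv : 5 ≤ v) (hodd : Odd v)
    (hPBD : ∃ (n : ℕ) (A : Fin n → Finset (Fin v)), IsPBD A 1 {5, 7, 9}) :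
    ∃ (n : ℕ) (B : Fin n → Finset (Fin v)),
      IsPBD B 3 {3} ∧ TradeFree B ∧ Function.Injective B :=
  tradeFree_ts3_of_pbd579_general v hPBD
end

section
/- For every threefold triple system TS_3(v), the rank over the field F_2 of its generalized incidence matrix N_2 is at most (v−1)(v−2)/2, i.e. at most binom(v−1,2). -/
open Finset

/-! Over `𝔽₂`, let `u_x` be the vector on pairs that indicates the pairs through the point `x`.
A block of odd size `k` containing `x` contains exactly `k - 1` pairs through `x`, an even number,
so every `u_x` lies in the left kernel of `N₂`. The `u_x` with `x ≠ x₀` are linearly independent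
(only `u_x` is nonzero at the pair `{x, x₀}`), hence
`rank N₂ ≤ binom(v, 2) - (v - 1) = binom(v - 1, 2)`. -/

section

variable {V : Type*} [DecidableEq V]

lemma card_pairs_mem_subset [Fintype V] {s : Finset V} {x : V} (hx : x ∈ s) :
    #{P : {P : Finset V // P.card = 2} | x ∈ (P : Finset V) ∧ (P : Finset V) ⊆ s} = #s - 1 := by
  have h := card_filter_powersetCard_subset {x} s 2 (by simpa) (by simp)
  rw [card_singleton, Nat.choose_one_right] at h
  rw [← h, ← card_map (Function.Embedding.subtype _)]
  refine congrArg card ?_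
  ext P
  simp [and_comm, and_left_comm]

def pointPairIncidence (V R : Type*) [DecidableEq V] [Zero R] [One R] :
    Matrix V {P : Finset V // P.card = 2} R :=
  Matrix.of fun x P => if x ∈ (P : Finset V) then 1 else 0

lemma pointPairIncidence_mul_N2_apply [Fintype V] {R : Type*} [NonAssocSemiring R] {ι : Type*}
    (B : ι → Finset V) (x : V) (i : ι) :
    (pointPairIncidence V R * N2 R B) x i = if x ∈ B i then ((#(B i) - 1 : ℕ) : R) else 0 := by
  simp only [Matrix.mul_apply, pointPairIncidence, N2, Matrix.of_apply, ite_zero_mul_ite_zero,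
    one_mul, sum_boole]
  split_ifs with hx
  · rw [card_pairs_mem_subset hx]
  · rw [filter_false_of_mem fun P _ hP => hx (hP.2 hP.1), card_empty, Nat.cast_zero]

lemma pointPairIncidence_mul_N2_eq_zero [Fintype V] {ι : Type*} {B : ι → Finset V}
    (hB : ∀ i, Odd #(B i)) : pointPairIncidence V (ZMod 2) * N2 (ZMod 2) B = 0 := by
  ext x i
  rw [pointPairIncidence_mul_N2_apply, ZMod.natCast_eq_zero_iff_even.mpr ((hB i).tsub_odd odd_one)]
  simp

lemma linearIndependent_pointPairIncidence_ne {R : Type*} [Ring R] (x₀ : V) :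
    LinearIndependent R fun x : {x // x ≠ x₀} => pointPairIncidence V R x := by
  rw [linearIndependent_iff']
  intro s g hg x hx
  have hpair := congrFun hg ⟨{(x : V), x₀}, card_pair x.2⟩
  rw [Finset.sum_apply, Finset.sum_eq_single x _ fun h => absurd hx h] at hpair
  · simpa [pointPairIncidence] using hpair
  · intro y _ hyx
    have hyx' : (y : V) ≠ x := fun h => hyx (Subtype.ext h)
    simp [pointPairIncidence, hyx', y.2]

lemma card_sub_one_le_rank_pointPairIncidence [Fintype V] {K : Type*} [Field K] :
    Fintype.card V - 1 ≤ (pointPairIncidence V K).rank := by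
  rcases isEmpty_or_nonempty V with hV | ⟨⟨x₀⟩⟩
  · simp
  · calc Fintype.card V - 1 = Fintype.card {x // x ≠ x₀} := by simp [Fintype.card_subtype_compl]
      _ = ((pointPairIncidence V K).submatrix (Subtype.val : {x // x ≠ x₀} → V) id).rank :=
        (LinearIndependent.rank_matrix (linearIndependent_pointPairIncidence_ne x₀)).symm
      _ ≤ (pointPairIncidence V K).rank := Matrix.rank_submatrix_le _ _ _

theorem rank_N2_add_card_sub_one_le [Fintype V] {ι : Type*} [Fintype ι] {B : ι → Finset V}
    (hB : ∀ i, Odd #(B i)) :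
    (N2 (ZMod 2) B).rank + (Fintype.card V - 1) ≤ (Fintype.card V).choose 2 := by
  have hsum := Matrix.rank_add_rank_le_card_of_mul_eq_zero (pointPairIncidence_mul_N2_eq_zero hB)
  rw [Fintype.card_finset_len] at hsum
  have hker := card_sub_one_le_rank_pointPairIncidence (V := V) (K := ZMod 2)
  omega

end

lemma Nat.choose_two_eq_sub_one_add (n : ℕ) : n.choose 2 = (n - 1) + (n - 1) * (n - 2) / 2 := by
  cases n with
  | zero => rfl
  | succ n => rw [Nat.choose_succ_succ, Nat.choose_one_right, Nat.choose_two_right]; rfl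

/-- For every threefold triple system `TS_3(v)`, the rank over `F₂` of its generalized
incidence matrix `N₂` is at most `(v-1)(v-2)/2 = binom(v-1, 2)`. -/
theorem ts3_two_rank_le {v : ℕ} {ι : Type*} [Fintype ι]
    (B : ι → Finset (Fin v)) (hB : IsPBD B 3 {3}) :
    (N2 (ZMod 2) B).rank ≤ (v - 1) * (v - 2) / 2 := by
  have hodd : ∀ i, Odd #(B i) := fun i => by rw [hB.1 i]; decide
  have hle := rank_N2_add_card_sub_one_le hodd
  rw [Fintype.card_fin, Nat.choose_two_eq_sub_one_add] at hle
  omega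
end

section
/- For every threefold triple system TS_3(v) with v ≥ 2, the rank over the rationals of its generalized incidence matrix N_2 is at least v(v−1)/6, i.e. at least (1/3)·binom(v,2). -/
open Finset

/-!
Every pair of points lies in some block, so no row of `N₂` vanishes, while the column of a
triple has only three nonzero entries. Choose a basis of the column space among the columns:
each row is nonzero on some basis column (otherwise it would vanish on the whole column space),
and each basis column accounts for at most three rows. Hence `binom(v,2) ≤ 3 · rank`.
-/

theorem exists_apply_ne_zero_of_mem_span {m K : Type*} [Field K] {s : Set (m → K)} {w : m → K}
    (hw : w ∈ Submodule.span K s) {i : m} (hi : w i ≠ 0) : ∃ x ∈ s, x i ≠ 0 := by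
  by_contra! h
  have hspan : Submodule.span K s ≤ LinearMap.ker (LinearMap.proj i : (m → K) →ₗ[K] K) :=
    Submodule.span_le.mpr h
  exact hi (hspan hw)

namespace Matrix

variable {m n K : Type*} [Fintype m] [Fintype n] [Field K] [DecidableEq K]

theorem card_le_mul_rank_of_card_support_col_le (M : Matrix m n K) (k : ℕ)
    (hrow : ∀ i, ∃ j, M i j ≠ 0) (hcol : ∀ j, #{i | M i j ≠ 0} ≤ k) :
    Fintype.card m ≤ k * M.rank := by
  classical
  obtain ⟨κ, a, ha, hspan, hli⟩ := exists_linearIndependent' K M.col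
  have : Fintype κ := Fintype.ofInjective a ha
  have hrank : M.rank = Fintype.card κ := by
    rw [rank_eq_finrank_span_cols, ← hspan, finrank_span_eq_card hli]
  have hcharge : ∀ i, ∃ c, M i (a c) ≠ 0 := by
    intro i
    obtain ⟨j, hj⟩ := hrow i
    have hj_span : M.col j ∈ Submodule.span K (Set.range (M.col ∘ a)) :=
      hspan ▸ Submodule.subset_span ⟨j, rfl⟩
    obtain ⟨_, ⟨c, rfl⟩, hc⟩ := exists_apply_ne_zero_of_mem_span hj_span hj
    exact ⟨c, hc⟩
  choose g hg using hcharge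
  rw [hrank, ← card_univ, ← card_univ]
  refine card_le_mul_card_image_of_maps_to (f := g) (fun _ _ ↦ mem_univ _) k fun c _ ↦ ?_
  refine (card_le_card fun i hi ↦ ?_).trans (hcol (a c))
  simp only [mem_filter, mem_univ, true_and] at hi ⊢
  exact hi ▸ hg i

end Matrix

section N2

variable {V ι F : Type*} [DecidableEq V] [Zero F] [One F] [NeZero (1 : F)] (B : ι → Finset V)

theorem N2_apply_ne_zero_iff (P : {P : Finset V // P.card = 2}) (i : ι) :
    N2 F B P i ≠ 0 ↔ (P : Finset V) ⊆ B i := by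
  simp [N2]

theorem card_N2_col_support_le [Fintype V] [DecidableEq F] (i : ι) :
    #{P | N2 F B P i ≠ 0} ≤ (B i).card.choose 2 := by
  rw [← card_powersetCard]
  refine card_le_card_of_injOn Subtype.val (fun P hP ↦ ?_) Subtype.val_injective.injOn
  simp only [coe_filter, mem_univ, true_and, N2_apply_ne_zero_iff] at hP
  exact mem_powersetCard.mpr ⟨hP, P.2⟩

end N2

theorem ts3_rat_rank_ge_general {v : ℕ} {ι : Type*} [Fintype ι]
    (B : ι → Finset (Fin v)) (hB : IsPBD B 3 {3}) :
    v * (v - 1) ≤ 6 * (N2 ℚ B).rank := by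
  obtain ⟨hcard, hpair⟩ := hB
  have hrow : ∀ P, ∃ i, N2 ℚ B P i ≠ 0 := fun P ↦ by
    obtain ⟨i, hi⟩ := card_pos.mp (by rw [hpair P P.2]; norm_num)
    exact ⟨i, (N2_apply_ne_zero_iff B P i).mpr (mem_filter.mp hi).2⟩
  have hcol : ∀ i, #{P | N2 ℚ B P i ≠ 0} ≤ 3 := fun i ↦
    (card_N2_col_support_le B i).trans_eq (by rw [show #(B i) = 3 from hcard i]; rfl)
  have hpairs := (N2 ℚ B).card_le_mul_rank_of_card_support_col_le 3 hrow hcol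
  rw [Fintype.card_finset_len, Fintype.card_fin, Nat.choose_two_right] at hpairs
  have := (Nat.even_mul_pred_self v).two_dvd
  omega

/-- For every threefold triple system `TS_3(v)` with `v ≥ 2`, the rank over `ℚ` of its
generalized incidence matrix `N₂` is at least `v(v-1)/6 = (1/3)·binom(v,2)`
(stated without division as `v(v-1) ≤ 6·rank`). -/
theorem ts3_rat_rank_ge {v : ℕ} (hv : 2 ≤ v) {ι : Type*} [Fintype ι]
    (B : ι → Finset (Fin v)) (hB : IsPBD B 3 {3}) :
    v * (v - 1) ≤ 6 * (N2 ℚ B).rank :=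
  ts3_rat_rank_ge_general B hB
end
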